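/- arXiv:2108.03303 — 6 statements merged into one kernel-verified Lean document; each statement's English description precedes it below -/
import Mathlib

section
/- Let L be a complete lattice, regarded as a complete meet-semilattice. An element a ∈ L is a non-generator (with respect to complete-subsemilattice generation) if and only if a is meet-reducible, i.e. there exists a subset Y ⊆ L with a ∉ Y and a = ⋀Y. -/
/-- A complete subsemilattice of a complete lattice: a subset closed under
arbitrary infima computed in `L` (including the empty infimum, so it contains `⊤`). -/
def IsCompleteSubsemilattice {L : Type*} [CompleteLattice L] (S : Set L) : Prop :=
  ∀ Y : Set L, Y ⊆ S → sInf Y ∈ S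

/-- The complete subsemilattice generated by `X`: the intersection of all
complete subsemilattices containing `X`. -/
def semiGen {L : Type*} [CompleteLattice L] (X : Set L) : Set L :=
  ⋂₀ {S : Set L | IsCompleteSubsemilattice S ∧ X ⊆ S}

/-- `a` is a non-generator (w.r.t. complete-subsemilattice generation). -/
def IsSemiNonGenerator {L : Type*} [CompleteLattice L] (a : L) : Prop :=
  ∀ X : Set L, semiGen (X ∪ {a}) = Set.univ → semiGen X = Set.univ

lemma subset_semiGen {L : Type*} [CompleteLattice L] (X : Set L) : X ⊆ semiGen X :=
  fun _ hx S hS => hS.2 hx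

lemma semiGen_subset {L : Type*} [CompleteLattice L] {X S : Set L}
    (h : IsCompleteSubsemilattice S) (hXS : X ⊆ S) : semiGen X ⊆ S :=
  fun _ hx => hx S ⟨h, hXS⟩

lemma isSub_semiGen {L : Type*} [CompleteLattice L] (X : Set L) :
    IsCompleteSubsemilattice (semiGen X) := by
  intro Y hY S hS
  exact hS.1 Y (fun y hy => hY hy S hS)

/-- In a complete lattice regarded as a complete meet-semilattice, an element is a
non-generator iff it is meet-reducible. -/
theorem semiNonGenerator_iff_meetReducible {L : Type*} [CompleteLattice L] (a : L) :
    IsSemiNonGenerator a ↔ ∃ Y : Set L, a ∉ Y ∧ a = sInf Y := by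
  constructor
  · intro h
    refine ⟨{x | a < x}, by simp, ?_⟩
    by_contra hne
    have hle : a ≤ sInf {x | a < x} := le_sInf fun x hx => hx.le
    have hlt : a < sInf {x | a < x} := lt_of_le_of_ne hle hne
    have hsub : IsCompleteSubsemilattice {x : L | x ≠ a} := by
      intro Z hZ hEq
      have h1 : sInf {x | a < x} ≤ sInf Z := le_sInf fun z hz => by
        have haz : a ≤ z := hEq ▸ sInf_le hz
        have : a < z := lt_of_le_of_ne haz (Ne.symm (hZ hz))
        exact sInf_le this
      exact absurd (hEq ▸ (hlt.trans_le h1)) (lt_irrefl a)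
    have hu : semiGen ((Set.univ \ {a}) ∪ {a}) = (Set.univ : Set L) := by
      have : (Set.univ \ {a}) ∪ {a} = (Set.univ : Set L) := by
        ext x; by_cases hx : x = a <;> simp [hx]
      rw [this]
      exact Set.eq_univ_of_univ_subset (subset_semiGen _)
    have huniv := h (Set.univ \ {a}) hu
    have ha : a ∈ semiGen (Set.univ \ {a}) := by rw [huniv]; trivial
    have : a ∈ {x : L | x ≠ a} :=
      semiGen_subset hsub (fun x hx => hx.2) ha
    exact this rfl
  · rintro ⟨Y, haY, ha⟩ X hX
    set S := semiGen X with hS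
    have hSsub : IsCompleteSubsemilattice S := isSub_semiGen X
    have htop : (⊤ : L) ∈ S := by
      have := hSsub ∅ (Set.empty_subset S)
      simpa using this
    set T : Set L := S ∪ {x | ∃ s ∈ S, x = a ⊓ s} with hT
    have hTsub : IsCompleteSubsemilattice T := by
      intro Z hZ
      by_cases hZS : Z ⊆ S
      · exact Or.inl (hSsub Z hZS)
      · -- some element of Z is of the form a ⊓ s, so sInf Z ≤ a
        obtain ⟨z₀, hz₀Z, hz₀S⟩ := Set.not_subset.mp hZS
        obtain ⟨s₀, hs₀S, hz₀⟩ := (hZ hz₀Z).resolve_left hz₀S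
        have hZa : sInf Z ≤ a := le_trans (sInf_le hz₀Z) (hz₀ ▸ inf_le_left)
        set W : Set L := {s ∈ S | s ∈ Z ∨ a ⊓ s ∈ Z} with hW
        have hWS : W ⊆ S := fun w hw => hw.1
        have hWinf : sInf W ∈ S := hSsub W hWS
        refine Or.inr ⟨sInf W, hWinf, le_antisymm ?_ ?_⟩
        · -- sInf Z ≤ a ⊓ sInf W
          refine le_inf hZa (le_sInf fun w hw => ?_)
          rcases hw.2 with h1 | h1
          · exact sInf_le h1
          · exact le_trans (sInf_le h1) inf_le_right
        · -- a ⊓ sInf W ≤ sInf Z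
          refine le_sInf fun z hz => ?_
          rcases hZ hz with h1 | h1
          · have hzW : z ∈ W := ⟨h1, Or.inl hz⟩
            exact le_trans inf_le_right (sInf_le hzW)
          · obtain ⟨s, hsS, rfl⟩ := h1
            have hsW : s ∈ W := ⟨hsS, Or.inr hz⟩
            exact inf_le_inf le_rfl (sInf_le hsW)
    have hXT : X ∪ {a} ⊆ T := by
      rintro x (hx | hx)
      · exact Or.inl (subset_semiGen X hx)
      · have hxa : x = a := hx
        subst hxa
        exact Or.inr ⟨⊤, htop, by simp⟩
    have hTuniv : T = Set.univ :=
      Set.eq_univ_of_univ_subset (hX ▸ semiGen_subset hTsub hXT)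
    -- every y ∈ Y is in S
    have hYS : Y ⊆ S := by
      intro y hy
      have hyT : y ∈ T := hTuniv ▸ Set.mem_univ y
      rcases hyT with h1 | h1
      · exact h1
      · obtain ⟨s, hsS, rfl⟩ := h1
        exfalso
        have hay : a ≤ a ⊓ s := le_of_eq_of_le ha (sInf_le hy)
        have : a ⊓ s = a := le_antisymm inf_le_left hay
        exact haY (this ▸ hy)
    have haS : a ∈ S := ha ▸ hSsub Y hYS
    have : X ∪ {a} ⊆ S := by
      rintro x (hx | hx)
      · exact subset_semiGen X hx
      · rcases hx with rfl; exact haS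
    exact Set.eq_univ_of_univ_subset (hX ▸ semiGen_subset hSsub this)
end

section
/- Let L be a complete lattice, regarded as a complete meet-semilattice. The set Γ of all non-generators of L (with respect to complete-subsemilattice generation) is itself a complete subsemilattice of L, i.e. Γ is closed under arbitrary infima computed in L and contains ⊤. -/
lemma mem_semiGen_iff {L : Type*} [CompleteLattice L] {X : Set L} {b : L} :
    b ∈ semiGen X ↔ ∃ Z, Z ⊆ X ∧ sInf Z = b := by
  constructor
  · intro hb
    exact hb {b | ∃ Z, Z ⊆ X ∧ sInf Z = b}
      ⟨by
        intro Y hY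
        refine ⟨⋃₀ {W | W ⊆ X ∧ sInf W ∈ Y}, ?_, ?_⟩
        · intro x hx
          obtain ⟨W, ⟨hWX, _⟩, hxW⟩ := hx
          exact hWX hxW
        · apply le_antisymm
          · apply le_sInf
            intro y hy
            obtain ⟨W, hWX, hW⟩ := hY hy
            calc sInf (⋃₀ {W | W ⊆ X ∧ sInf W ∈ Y}) ≤ sInf W := by
                  apply sInf_le_sInf
                  intro x hx
                  exact ⟨W, ⟨hWX, hW ▸ hy⟩, hx⟩
              _ = y := hW
          · apply le_sInf
            intro z hz
            obtain ⟨W, ⟨_, hWY⟩, hzW⟩ := hz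
            exact le_trans (sInf_le hWY) (sInf_le hzW)
       , fun x hx => ⟨{x}, Set.singleton_subset_iff.mpr hx, sInf_singleton⟩⟩
  · rintro ⟨Z, hZX, rfl⟩
    intro S hS
    exact hS.1 Z (hZX.trans hS.2)

lemma semiGen_eq_univ_iff {L : Type*} [CompleteLattice L] {X : Set L} :
    semiGen X = Set.univ ↔ ∀ b : L, ∃ Z, Z ⊆ X ∧ sInf Z = b := by
  constructor
  · intro h b
    exact mem_semiGen_iff.mp (h ▸ Set.mem_univ b)
  · intro h
    ext b
    simp only [Set.mem_univ, iff_true]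
    exact mem_semiGen_iff.mpr (h b)

lemma isSemiNonGenerator_iff {L : Type*} [CompleteLattice L] {a : L} :
    IsSemiNonGenerator a ↔ sInf (Set.Ioi a) = a := by
  constructor
  · intro h
    have h1 : semiGen ((Set.univ \ {a}) ∪ {a}) = Set.univ := by
      have : (Set.univ \ {a}) ∪ {a} = (Set.univ : Set L) := by
        ext x; simp [Classical.em]
      rw [this]
      ext b
      simp only [Set.mem_univ, iff_true]
      exact mem_semiGen_iff.mpr ⟨{b}, Set.subset_univ _, sInf_singleton⟩
    have h2 := h _ h1
    obtain ⟨Z, hZ, hZa⟩ := semiGen_eq_univ_iff.mp h2 a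
    have hZIoi : Z ⊆ Set.Ioi a := by
      intro z hz
      have hza : a ≤ z := hZa ▸ sInf_le hz
      have : z ≠ a := fun e => (hZ hz).2 (by simp [e])
      exact lt_of_le_of_ne hza (Ne.symm this)
    apply le_antisymm
    · calc sInf (Set.Ioi a) ≤ sInf Z := sInf_le_sInf hZIoi
        _ = a := hZa
    · exact le_sInf fun z hz => le_of_lt hz
  · intro h X hXa
    have haX : a ∈ semiGen X := by
      have hIoi : Set.Ioi a ⊆ semiGen X := by
        intro z hz
        obtain ⟨Z, hZ, hZz⟩ := semiGen_eq_univ_iff.mp hXa z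
        have haZ : a ∉ Z := by
          intro haZ
          exact absurd (hZz ▸ sInf_le haZ) (not_le_of_gt hz)
        have : Z ⊆ X := fun x hx => (hZ hx).resolve_right
          (fun e => haZ (Set.mem_singleton_iff.mp e ▸ hx))
        exact mem_semiGen_iff.mpr ⟨Z, this, hZz⟩
      rw [← h]
      intro S hS
      exact hS.1 (Set.Ioi a) (fun x hx => hIoi hx S hS)
    -- semiGen (X ∪ {a}) ⊆ semiGen X since semiGen X is a subsemilattice containing X ∪ {a}
    ext b
    simp only [Set.mem_univ, iff_true]
    have hb : b ∈ semiGen (X ∪ {a}) := hXa ▸ Set.mem_univ b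
    obtain ⟨Z, hZ, hZb⟩ := mem_semiGen_iff.mp hb
    have hsub : Z ⊆ semiGen X := by
      intro z hz
      rcases hZ hz with hzX | hza
      · exact fun S hS => hS.2 hzX
      · rw [Set.mem_singleton_iff.mp hza]; exact haX
    intro S hS
    exact hZb ▸ hS.1 Z (fun z hz => hsub hz S hS)

/-- The set of non-generators of a complete (meet-)semilattice is itself a complete
subsemilattice: it is closed under arbitrary infima and contains `⊤`. -/
theorem semiNonGenerators_isCompleteSubsemilattice {L : Type*} [CompleteLattice L] :
    IsCompleteSubsemilattice {a : L | IsSemiNonGenerator a} ∧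
      (⊤ : L) ∈ {a : L | IsSemiNonGenerator a} := by
  constructor
  · intro Y hY
    rw [Set.mem_setOf_eq, isSemiNonGenerator_iff]
    apply le_antisymm
    · apply le_sInf
      intro y hy
      have hyng : sInf (Set.Ioi y) = y := isSemiNonGenerator_iff.mp (hY hy)
      calc sInf (Set.Ioi (sInf Y)) ≤ sInf (Set.Ioi y) :=
            sInf_le_sInf (fun z hz => lt_of_le_of_lt (sInf_le hy) hz)
        _ = y := hyng
    · exact le_sInf fun z hz => le_of_lt hz
  · rw [Set.mem_setOf_eq, isSemiNonGenerator_iff]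
    apply le_antisymm le_top
    exact le_sInf fun z hz => absurd hz not_top_lt
end

section
/- Let L₁ = (WithTop ℕ) × Bool with the componentwise lattice order. The set M = {(k, true) : k ∈ WithTop ℕ} ∪ {(0, false)} is a proper complete sublattice of L₁, and the complete sublattice generated by M ∪ {(⊤, false)} is all of L₁. In particular, (⊤, false) is a relative generator of L₁. -/
/-- A complete sublattice of a complete lattice: a subset closed under arbitrary
infima and suprema computed in `L` (including the empty ones, so it contains `⊤` and `⊥`). -/
def IsCompleteSublattice {L : Type*} [CompleteLattice L] (S : Set L) : Prop :=
  (∀ Y : Set L, Y ⊆ S → sInf Y ∈ S) ∧ (∀ Y : Set L, Y ⊆ S → sSup Y ∈ S)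

/-- The complete sublattice generated by `X`: the intersection of all complete
sublattices containing `X`. -/
def latGen {L : Type*} [CompleteLattice L] (X : Set L) : Set L :=
  ⋂₀ {S : Set L | IsCompleteSublattice S ∧ X ⊆ S}

/-- `a` is a non-generator (w.r.t. complete-sublattice generation). -/
def IsLatNonGenerator {L : Type*} [CompleteLattice L] (a : L) : Prop :=
  ∀ X : Set L, latGen (X ∪ {a}) = Set.univ → latGen X = Set.univ

/-- A maximal proper complete sublattice. -/
def IsMaxProperSublattice {L : Type*} [CompleteLattice L] (P : Set L) : Prop :=
  IsCompleteSublattice P ∧ P ≠ Set.univ ∧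
    ∀ Q : Set L, IsCompleteSublattice Q → Q ≠ Set.univ → P ⊆ Q → P = Q

/-- In `L₁ = (WithTop ℕ) × Bool`, the set `M = (WithTop ℕ × {true}) ∪ {(0, false)}` is a
proper complete sublattice, and together with `(⊤, false)` it generates all of `L₁`;
in particular `(⊤, false)` is a relative generator. -/
theorem relativeGenerator_top_false_L1 :
    IsCompleteSublattice ({p | p.2 = true} ∪ {((0 : WithTop ℕ), false)} : Set (WithTop ℕ × Bool)) ∧
    ({p | p.2 = true} ∪ {((0 : WithTop ℕ), false)} : Set (WithTop ℕ × Bool)) ≠ Set.univ ∧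
    latGen (({p | p.2 = true} ∪ {((0 : WithTop ℕ), false)} : Set (WithTop ℕ × Bool)) ∪
      {((⊤ : WithTop ℕ), false)}) = Set.univ ∧
    ¬ IsLatNonGenerator ((⊤ : WithTop ℕ), false) := by
  set M : Set (WithTop ℕ × Bool) := {p | p.2 = true} ∪ {((0 : WithTop ℕ), false)} with hM
  have hbot : ((⊥ : WithTop ℕ × Bool)) = ((0 : WithTop ℕ), false) := rfl
  have hsub : IsCompleteSublattice M := by
    constructor
    · intro Y hY
      by_cases h : ∃ y ∈ Y, y.2 = false
      · obtain ⟨y, hy, hy2⟩ := h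
        have hy0 : y = ((0 : WithTop ℕ), false) := by
          rcases hY hy with h1 | h1
          · simp [hy2] at h1
          · exact h1
        have : sInf Y = ⊥ := le_bot_iff.mp (by rw [hbot, ← hy0]; exact sInf_le hy)
        right
        rw [this, hbot]; rfl
      · push_neg at h
        left
        show (sInf Y).2 = true
        rw [Prod.snd_sInf]
        refine top_le_iff.mp (le_sInf ?_)
        rintro b ⟨y, hy, rfl⟩
        have hyt := h y hy
        simp only [Bool.not_eq_false] at hyt
        simp [hyt]
    · intro Y hY
      by_cases h : ∃ y ∈ Y, y.2 = true
      · obtain ⟨y, hy, hy2⟩ := h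
        left
        show (sSup Y).2 = true
        have := le_sSup hy
        have h2 : y.2 ≤ (sSup Y).2 := this.2
        rw [hy2] at h2
        exact top_le_iff.mp h2
      · push_neg at h
        have hYsub : Y ⊆ {((0 : WithTop ℕ), false)} := by
          intro y hy
          rcases hY hy with h1 | h1
          · exact absurd h1 (h y hy)
          · exact h1
        have : sSup Y ≤ ((0 : WithTop ℕ), false) := by
          rw [← hbot]; exact sSup_le fun y hy => by rw [Set.mem_singleton_iff.mp (hYsub hy), hbot]
        right
        rw [Set.mem_singleton_iff, ← hbot]
        exact le_bot_iff.mp (hbot ▸ this)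
  have hne : M ≠ Set.univ := by
    intro h
    have : ((1 : WithTop ℕ), false) ∈ M := h ▸ Set.mem_univ _
    rcases this with h1 | h1
    · simp at h1
    · simp at h1
  have hgen : latGen (M ∪ {((⊤ : WithTop ℕ), false)}) = Set.univ := by
    apply Set.eq_univ_of_forall
    intro p S hS
    obtain ⟨⟨hSinf, _⟩, hXS⟩ := hS
    by_cases hp : p.2 = true
    · exact hXS (Or.inl (Or.inl hp))
    · have hp2 : p.2 = false := by simpa using hp
      have key : sInf {(p.1, true), ((⊤ : WithTop ℕ), false)} = p := by
        rw [sInf_pair]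
        ext
        · simp
        · simp [hp2]
      rw [← key]
      apply hSinf
      intro q hq
      rcases hq with rfl | hq
      · exact hXS (Or.inl (Or.inl rfl))
      · exact hXS (Or.inr hq)
  refine ⟨hsub, hne, hgen, ?_⟩
  intro hng
  have := hng M (by simpa using hgen)
  apply hne
  have hsubM : latGen M ⊆ M := Set.sInter_subset_of_mem ⟨hsub, subset_refl _⟩
  exact Set.eq_univ_of_univ_subset (this ▸ hsubM)
end

section
/- Let L₁ = (WithTop ℕ) × Bool with the componentwise lattice order. The element (⊤, false) belongs to every maximal proper complete sublattice of L₁. -/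
/-- In `L₁ = (WithTop ℕ) × Bool`, the element `(⊤, false)` belongs to every maximal
proper complete sublattice. -/
theorem top_false_mem_maxProper_L1 :
    ∀ P : Set (WithTop ℕ × Bool), IsMaxProperSublattice P → ((⊤ : WithTop ℕ), false) ∈ P := by
  intro P hP
  unfold IsMaxProperSublattice IsCompleteSublattice at hP
  obtain ⟨⟨hinf, hsup⟩, hne, hmax⟩ := hP
  by_contra htf
  have htopP : ((⊤, true) : WithTop ℕ × Bool) ∈ P := by
    have h := hinf ∅ (Set.empty_subset _)
    rw [sInf_empty] at h
    exact h
  set T : Set (WithTop ℕ × Bool) := P ∪ ((fun p => (p.1, false)) '' P) with hT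
  have hPT : P ⊆ T := Set.subset_union_left
  have key : ∀ Y : Set (WithTop ℕ × Bool), Y ⊆ T →
      ∃ Z : Set (WithTop ℕ × Bool), Z ⊆ P ∧ Prod.fst '' Z = Prod.fst '' Y ∧
        (∀ y ∈ Y, y.2 ≤ sSup (Prod.snd '' Z)) ∧
        (∀ p ∈ Z, sInf (Prod.snd '' Y) ≤ p.2) := by
    intro Y hY
    refine ⟨{p | p ∈ P ∧ ∃ y ∈ Y, p.1 = y.1 ∧ y.2 ≤ p.2}, fun p hp => hp.1, ?_, ?_, ?_⟩
    · ext a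
      constructor
      · rintro ⟨p, ⟨_, y, hy, h1, _⟩, rfl⟩
        exact ⟨y, hy, h1.symm⟩
      · rintro ⟨y, hy, rfl⟩
        rcases hY hy with h | ⟨p, hp, rfl⟩
        · exact ⟨y, ⟨h, y, hy, rfl, le_rfl⟩, rfl⟩
        · exact ⟨p, ⟨hp, (p.1, false), hy, rfl, Bool.false_le _⟩, rfl⟩
    · intro y hy
      rcases hY hy with h | ⟨p, hp, rfl⟩
      · exact le_sSup ⟨y, ⟨h, y, hy, rfl, le_rfl⟩, rfl⟩
      · exact Bool.false_le _
    · rintro p ⟨_, y, hy, -, hle⟩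
      exact le_trans (sInf_le ⟨y, hy, rfl⟩) hle
  have hTlat : IsCompleteSublattice T := by
    constructor
    · intro Y hY
      obtain ⟨Z, hZP, hfst, -, hZw⟩ := key Y hY
      have hZ : sInf Z ∈ P := hinf Z hZP
      have h1 : (sInf Y).1 = (sInf Z).1 := by
        rw [Prod.fst_sInf, Prod.fst_sInf, hfst]
      have h2 : (sInf Y).2 ≤ (sInf Z).2 := by
        rw [Prod.snd_sInf, Prod.snd_sInf]
        refine le_sInf ?_
        rintro b ⟨p, hp, rfl⟩
        exact hZw p hp
      cases hb : (sInf Y).2 with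
      | false =>
        refine Or.inr ⟨sInf Z, hZ, ?_⟩
        rw [Prod.ext_iff]
        exact ⟨h1.symm, hb.symm⟩
      | true =>
        rw [hb] at h2
        have hc : (sInf Z).2 = true := top_le_iff.mp h2
        have : sInf Y = sInf Z := Prod.ext_iff.mpr ⟨h1, by rw [hb, hc]⟩
        rw [this]
        exact Or.inl hZ
    · intro Y hY
      obtain ⟨Z, hZP, hfst, hZw, -⟩ := key Y hY
      have hZ : sSup Z ∈ P := hsup Z hZP
      have h1 : (sSup Y).1 = (sSup Z).1 := by
        rw [Prod.fst_sSup, Prod.fst_sSup, hfst]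
      have h2 : (sSup Y).2 ≤ (sSup Z).2 := by
        rw [Prod.snd_sSup]
        refine sSup_le ?_
        rintro b ⟨y, hy, rfl⟩
        rw [Prod.snd_sSup]
        exact hZw y hy
      cases hb : (sSup Y).2 with
      | false =>
        refine Or.inr ⟨sSup Z, hZ, ?_⟩
        rw [Prod.ext_iff]
        exact ⟨h1.symm, hb.symm⟩
      | true =>
        rw [hb] at h2
        have hc : (sSup Z).2 = true := top_le_iff.mp h2
        have : sSup Y = sSup Z := Prod.ext_iff.mpr ⟨h1, by rw [hb, hc]⟩
        rw [this]
        exact Or.inl hZ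
  have hTuniv : T = Set.univ := by
    by_contra h
    have := hmax T hTlat h hPT
    apply htf
    rw [this]
    exact Or.inr ⟨(⊤, true), htopP, rfl⟩
  have htrue : ∀ a : WithTop ℕ, ((a, true) : WithTop ℕ × Bool) ∈ P := by
    intro a
    have : ((a, true) : WithTop ℕ × Bool) ∈ T := hTuniv ▸ Set.mem_univ _
    rcases this with h | ⟨p, _, hp⟩
    · exact h
    · exact absurd (congrArg Prod.snd hp) (by simp)
  have hdown : ∀ a f : WithTop ℕ, a ≤ f → ((f, false) : WithTop ℕ × Bool) ∈ P →
      ((a, false) : WithTop ℕ × Bool) ∈ P := by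
    intro a f haf hf
    have h := hinf {((f, false) : WithTop ℕ × Bool), (a, true)}
      (by rintro x (rfl | rfl); exacts [hf, htrue a])
    rw [sInf_pair] at h
    have : ((f, false) : WithTop ℕ × Bool) ⊓ (a, true) = (a, false) := by
      rw [Prod.ext_iff]
      constructor
      · exact inf_eq_right.mpr haf
      · simp
    rwa [this] at h
  have hfin : ∃ m : ℕ, (((m : WithTop ℕ), false) : WithTop ℕ × Bool) ∉ P := by
    by_contra h
    push_neg at h
    apply htf
    have hs := hsup (Set.range fun n : ℕ => (((n : WithTop ℕ), false) : WithTop ℕ × Bool))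
      (by rintro x ⟨n, rfl⟩; exact h n)
    have : sSup (Set.range fun n : ℕ => (((n : WithTop ℕ), false) : WithTop ℕ × Bool))
        = ((⊤ : WithTop ℕ), false) := by
      rw [Prod.ext_iff]
      constructor
      · rw [Prod.fst_sSup]
        apply sSup_eq_top.mpr
        intro b hb
        obtain ⟨n, rfl⟩ := WithTop.ne_top_iff_exists.mp hb.ne |>.imp (fun n h => h.symm)
        exact ⟨((n + 1 : ℕ) : WithTop ℕ), ⟨(((n + 1 : ℕ) : WithTop ℕ), false), ⟨n + 1, rfl⟩, rfl⟩,
          by exact Nat.cast_lt.mpr (Nat.lt_succ_self n)⟩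
      · rw [Prod.snd_sSup]
        apply le_antisymm
        · apply sSup_le
          rintro b ⟨y, ⟨n, rfl⟩, rfl⟩
          exact le_rfl
        · exact Bool.false_le _
    rwa [this] at hs
  obtain ⟨m, hm⟩ := hfin
  set Q : Set (WithTop ℕ × Bool) := {p | p.2 = true ∨ p.1 ≤ (m : WithTop ℕ)} with hQ
  have hPQ : P ⊆ Q := by
    rintro ⟨a, b⟩ hp
    cases b with
    | true => exact Or.inl rfl
    | false =>
      refine Or.inr ?_
      by_contra hle
      exact hm (hdown _ a (le_of_not_ge hle) hp)
  have hQne : Q ≠ Set.univ := by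
    intro h
    have : (((m + 1 : ℕ) : WithTop ℕ), false) ∈ Q := h ▸ Set.mem_univ _
    rcases this with h' | h'
    · simp at h'
    · rw [Nat.cast_le] at h'
      omega
  have hQlat : IsCompleteSublattice Q := by
    constructor
    · intro Y hY
      cases hb : (sInf Y).2 with
      | true => exact Or.inl hb
      | false =>
        refine Or.inr ?_
        have hex : ∃ y ∈ Y, y.2 = false := by
          by_contra h
          push_neg at h
          have : (⊤ : Bool) ≤ (sInf Y).2 := by
            rw [Prod.snd_sInf]
            refine le_sInf ?_
            rintro b ⟨y, hy, rfl⟩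
            have := h y hy
            simp only [Bool.not_eq_false] at this
            rw [this]
            exact le_top
          rw [hb] at this
          exact absurd (top_le_iff.mp this) (by simp)
        obtain ⟨y, hy, hy2⟩ := hex
        have hy1 : y.1 ≤ (m : WithTop ℕ) := by
          rcases hY hy with h | h
          · rw [hy2] at h; simp at h
          · exact h
        refine le_trans ?_ hy1
        rw [Prod.fst_sInf]
        exact sInf_le ⟨y, hy, rfl⟩
    · intro Y hY
      cases hb : (sSup Y).2 with
      | true => exact Or.inl hb
      | false =>
        refine Or.inr ?_
        rw [Prod.fst_sSup]
        apply sSup_le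
        rintro a ⟨y, hy, rfl⟩
        have hy2 : y.2 = false := by
          have : y.2 ≤ (sSup Y).2 := by
            rw [Prod.snd_sSup]
            exact le_sSup ⟨y, hy, rfl⟩
          rw [hb] at this
          exact le_bot_iff.mp this
        rcases hY hy with h | h
        · rw [hy2] at h; simp at h
        · exact h
  have hPeQ := hmax Q hQlat hQne hPQ
  apply hm
  rw [hPeQ]
  exact Or.inr le_rfl
end

section
/- Let L₁ = (WithTop ℕ) × Bool with the componentwise lattice order. The set Γ of all non-generators of L₁ (with respect to complete-sublattice generation) equals {(0, false), (⊤, true)}, i.e. {⊥, ⊤}; in particular Γ is a complete sublattice of L₁. -/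
section Aux

variable {L : Type*} [CompleteLattice L]

lemma aux_subset_latGen (X : Set L) : X ⊆ latGen X :=
  fun x hx => Set.mem_sInter.mpr fun _ hS => hS.2 hx

lemma aux_latGen_subset {X S : Set L} (h : IsCompleteSublattice S) (hX : X ⊆ S) :
    latGen X ⊆ S :=
  Set.sInter_subset_of_mem ⟨h, hX⟩

lemma aux_latGen_isCS (X : Set L) : IsCompleteSublattice (latGen X) := by
  constructor
  · intro Y hY
    refine Set.mem_sInter.mpr fun S hS => ?_
    exact hS.1.1 Y fun y hy => Set.mem_sInter.mp (hY hy) S hS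
  · intro Y hY
    refine Set.mem_sInter.mpr fun S hS => ?_
    exact hS.1.2 Y fun y hy => Set.mem_sInter.mp (hY hy) S hS

lemma aux_bot_mem {S : Set L} (h : IsCompleteSublattice S) : (⊥ : L) ∈ S := by
  have := h.2 ∅ (Set.empty_subset S)
  rwa [sSup_empty] at this

lemma aux_top_mem {S : Set L} (h : IsCompleteSublattice S) : (⊤ : L) ∈ S := by
  have := h.1 ∅ (Set.empty_subset S)
  rwa [sInf_empty] at this

lemma aux_sup_mem {S : Set L} (h : IsCompleteSublattice S) {x y : L}
    (hx : x ∈ S) (hy : y ∈ S) : x ⊔ y ∈ S := by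
  have := h.2 {x, y} (by
    intro z hz
    rcases hz with hz | hz
    · exact hz ▸ hx
    · exact hz ▸ hy)
  rwa [sSup_pair] at this

lemma aux_inf_mem {S : Set L} (h : IsCompleteSublattice S) {x y : L}
    (hx : x ∈ S) (hy : y ∈ S) : x ⊓ y ∈ S := by
  have := h.1 {x, y} (by
    intro z hz
    rcases hz with hz | hz
    · exact hz ▸ hx
    · exact hz ▸ hy)
  rwa [sInf_pair] at this

/-- `⊥` and `⊤` are non-generators in any complete lattice. -/
lemma aux_nongen {a : L} (ha : a = ⊥ ∨ a = ⊤) : IsLatNonGenerator a := by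
  intro X hX
  have hfam : {S : Set L | IsCompleteSublattice S ∧ X ∪ {a} ⊆ S}
      = {S : Set L | IsCompleteSublattice S ∧ X ⊆ S} := by
    ext S
    simp only [Set.mem_setOf_eq, Set.union_subset_iff, Set.singleton_subset_iff]
    constructor
    · rintro ⟨h1, h2, _⟩; exact ⟨h1, h2⟩
    · rintro ⟨h1, h2⟩
      refine ⟨h1, h2, ?_⟩
      rcases ha with ha | ha
      · exact ha ▸ aux_bot_mem h1
      · exact ha ▸ aux_top_mem h1
  unfold latGen at hX ⊢
  rwa [hfam] at hX

/-- If there is a proper complete sublattice `X` such that `X ∪ {a}` generates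
everything, then `a` is a generator. -/
lemma aux_generator {a : L} {X : Set L} (hX : IsCompleteSublattice X)
    (hproper : X ≠ Set.univ) (hgen : latGen (X ∪ {a}) = Set.univ) :
    ¬ IsLatNonGenerator a := by
  intro h
  have := h X hgen
  exact hproper (Set.eq_univ_of_univ_subset
    (this ▸ aux_latGen_subset hX (subset_refl X)))

end Aux

section WT

/-- `↑n < x` forces `↑(n+1) ≤ x` in `WithTop ℕ`. -/
lemma aux_wt_succ_le {n : ℕ} {x : WithTop ℕ} (h : WithTop.some n < x) :
    WithTop.some (n + 1) ≤ x := by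
  induction x using WithTop.recTopCoe with
  | top => exact le_top
  | coe m => exact WithTop.coe_le_coe.mpr (WithTop.coe_lt_coe.mp h)

lemma aux_wt_le_pred {n : ℕ} {x : WithTop ℕ} (h : x < WithTop.some n) :
    x ≤ WithTop.some (n - 1) := by
  induction x using WithTop.recTopCoe with
  | top => exact absurd h (not_lt.mpr le_top)
  | coe m =>
    have h' : m < n := WithTop.coe_lt_coe.mp h
    exact WithTop.coe_le_coe.mpr (by omega)

/-- For `0 < n < ⊤`, the set of pairs whose first coordinate differs from `n`
is a complete sublattice of `WithTop ℕ × Bool`. -/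
lemma aux_Sn_cs (n : ℕ) (hn : n ≠ 0) :
    IsCompleteSublattice {p : WithTop ℕ × Bool | p.1 ≠ WithTop.some n} := by
  constructor
  · intro Y hY heq
    have h1 : (sInf Y).1 = sInf (Prod.fst '' Y) := rfl
    rw [h1] at heq
    have hall : ∀ x ∈ Prod.fst '' Y, WithTop.some (n + 1) ≤ x := by
      rintro x ⟨p, hp, rfl⟩
      have hle : WithTop.some n ≤ p.1 := heq ▸ sInf_le ⟨p, hp, rfl⟩
      exact aux_wt_succ_le (lt_of_le_of_ne hle (Ne.symm (hY hp)))
    have h2 := le_sInf hall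
    rw [heq] at h2
    have h3 := WithTop.coe_le_coe.mp h2
    omega
  · intro Y hY heq
    have h1 : (sSup Y).1 = sSup (Prod.fst '' Y) := rfl
    rw [h1] at heq
    have hall : ∀ x ∈ Prod.fst '' Y, x ≤ WithTop.some (n - 1) := by
      rintro x ⟨p, hp, rfl⟩
      have hle : p.1 ≤ WithTop.some n := heq ▸ le_sSup ⟨p, hp, rfl⟩
      exact aux_wt_le_pred (lt_of_le_of_ne hle (hY hp))
    have h2 := sSup_le hall
    rw [heq] at h2
    have h3 := WithTop.coe_le_coe.mp h2
    omega

/-- The set `{p | p.2 = true} ∪ {⊥}` is a complete sublattice. -/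
lemma aux_Pfalse_cs :
    IsCompleteSublattice
      {p : WithTop ℕ × Bool | p.2 = true ∨ p = ((0 : WithTop ℕ), false)} := by
  have hbot : ((0 : WithTop ℕ), false) = (⊥ : WithTop ℕ × Bool) := rfl
  constructor
  · intro Y hY
    cases hb : (sInf Y).2 with
    | true => exact Or.inl hb
    | false =>
      have hex : ∃ p ∈ Y, p.2 = false := by
        by_contra hc
        push_neg at hc
        have h2 : (sInf Y).2 = sInf (Prod.snd '' Y) := rfl
        have : sInf (Prod.snd '' Y) = true := by
          refine top_le_iff.mp (le_sInf ?_)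
          rintro b ⟨p, hp, rfl⟩
          exact (Bool.not_eq_false _).mp (hc p hp) ▸ le_refl _
        rw [h2, this] at hb; exact Bool.noConfusion hb
      obtain ⟨p, hp, hp2⟩ := hex
      have hpbot : p = (⊥ : WithTop ℕ × Bool) := by
        rcases hY hp with h | h
        · rw [hp2] at h; exact Bool.noConfusion h
        · exact h ▸ hbot
      right
      rw [hbot]
      exact le_antisymm (hpbot ▸ sInf_le hp) bot_le
  · intro Y hY
    cases hb : (sSup Y).2 with
    | true => exact Or.inl hb
    | false =>
      have hall : ∀ p ∈ Y, p = (⊥ : WithTop ℕ × Bool) := by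
        intro p hp
        have : p.2 ≤ (sSup Y).2 := (le_sSup hp).2
        rw [hb] at this
        have hp2 : p.2 = false := le_antisymm this (Bool.false_le _)
        rcases hY hp with h | h
        · rw [hp2] at h; exact Bool.noConfusion h
        · exact h ▸ hbot
      right
      rw [hbot]
      exact le_antisymm (sSup_le fun p hp => (hall p hp).le) bot_le

/-- The set `{p | p.2 = false} ∪ {⊤}` is a complete sublattice. -/
lemma aux_Ptrue_cs :
    IsCompleteSublattice
      {p : WithTop ℕ × Bool | p.2 = false ∨ p = ((⊤ : WithTop ℕ), true)} := by
  have htop : ((⊤ : WithTop ℕ), true) = (⊤ : WithTop ℕ × Bool) := rfl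
  constructor
  · intro Y hY
    cases hb : (sInf Y).2 with
    | false => exact Or.inl hb
    | true =>
      have hall : ∀ p ∈ Y, p = (⊤ : WithTop ℕ × Bool) := by
        intro p hp
        have : (sInf Y).2 ≤ p.2 := (sInf_le hp).2
        rw [hb] at this
        have hp2 : p.2 = true := le_antisymm (Bool.le_true _) this
        rcases hY hp with h | h
        · rw [hp2] at h; exact Bool.noConfusion h
        · exact h ▸ htop
      right
      rw [htop]
      exact le_antisymm le_top (le_sInf fun p hp => (hall p hp).ge)
  · intro Y hY
    cases hb : (sSup Y).2 with
    | false => exact Or.inl hb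
    | true =>
      have hex : ∃ p ∈ Y, p.2 = true := by
        by_contra hc
        push_neg at hc
        have h2 : (sSup Y).2 = sSup (Prod.snd '' Y) := rfl
        have : sSup (Prod.snd '' Y) = false := by
          refine le_antisymm (sSup_le ?_) (Bool.false_le _)
          rintro b ⟨p, hp, rfl⟩
          exact ((Bool.not_eq_true _).mp (hc p hp)).le
        rw [h2, this] at hb; exact Bool.noConfusion hb
      obtain ⟨p, hp, hp2⟩ := hex
      have hptop : p = (⊤ : WithTop ℕ × Bool) := by
        rcases hY hp with h | h
        · rw [hp2] at h; exact Bool.noConfusion h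
        · exact h ▸ htop
      right
      rw [htop]
      exact le_antisymm le_top (hptop ▸ le_sSup hp)

end WT

section Generators

/-- `(n, b)` with `0 < n < ⊤` is a generator. -/
lemma aux_gen_coe (n : ℕ) (hn : n ≠ 0) (b : Bool) :
    ¬ IsLatNonGenerator (WithTop.some n, b) := by
  set X : Set (WithTop ℕ × Bool) := {p | p.1 ≠ WithTop.some n} with hXdef
  refine aux_generator (aux_Sn_cs n hn) ?_ ?_
  · intro h
    have : (WithTop.some n, b) ∈ X := h.ge (Set.mem_univ _)
    exact this rfl
  · apply Set.eq_univ_of_forall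
    intro p
    set G := latGen (X ∪ {(WithTop.some n, b)}) with hGdef
    have hGcs : IsCompleteSublattice G := aux_latGen_isCS _
    have hXG : X ⊆ G := (Set.subset_union_left).trans (aux_subset_latGen _)
    have haG : (WithTop.some n, b) ∈ G :=
      aux_subset_latGen _ (Set.mem_union_right _ rfl)
    by_cases hp1 : p.1 = WithTop.some n
    · obtain ⟨x, c⟩ := p
      simp only at hp1
      subst hp1
      cases b with
      | true =>
        cases c with
        | true => exact haG
        | false =>
          have htf : ((⊤ : WithTop ℕ), false) ∈ G := by
            apply hXG
            simp only [hXdef, Set.mem_setOf_eq]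
            exact (WithTop.coe_ne_top (a := n)).symm
          have hmem := aux_inf_mem hGcs haG htf
          have heq : (WithTop.some n, true) ⊓ ((⊤ : WithTop ℕ), false)
              = (WithTop.some n, false) := by
            have h1 : WithTop.some n ⊓ (⊤ : WithTop ℕ) = WithTop.some n := inf_top_eq _
            simp [Prod.ext_iff, h1]
          rwa [heq] at hmem
      | false =>
        cases c with
        | false => exact haG
        | true =>
          have hzt : ((0 : WithTop ℕ), true) ∈ G := by
            apply hXG
            simp only [hXdef, Set.mem_setOf_eq]
            rw [← WithTop.coe_zero]
            intro h
            exact hn (WithTop.coe_inj.mp h).symm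
          have hmem := aux_sup_mem hGcs haG hzt
          have heq : (WithTop.some n, false) ⊔ ((0 : WithTop ℕ), true)
              = (WithTop.some n, true) := by
            have h1 : WithTop.some n ⊔ (0 : WithTop ℕ) = WithTop.some n := by simp
            simp [Prod.ext_iff, h1]
          rwa [heq] at hmem
    · exact hXG hp1

/-- `(⊤, false)` is a generator. -/
lemma aux_gen_topfalse : ¬ IsLatNonGenerator ((⊤ : WithTop ℕ), false) := by
  set X : Set (WithTop ℕ × Bool) :=
    {p | p.2 = true ∨ p = ((0 : WithTop ℕ), false)} with hXdef
  refine aux_generator aux_Pfalse_cs ?_ ?_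
  · intro h
    have hmem : (WithTop.some 1, false) ∈ X := h.ge (Set.mem_univ _)
    rcases hmem with h1 | h1
    · exact Bool.noConfusion h1
    · have h2 := congrArg Prod.fst h1
      simp only at h2
      rw [← WithTop.coe_zero] at h2
      exact one_ne_zero (WithTop.coe_inj.mp h2)
  · apply Set.eq_univ_of_forall
    intro p
    set G := latGen (X ∪ {((⊤ : WithTop ℕ), false)}) with hGdef
    have hGcs : IsCompleteSublattice G := aux_latGen_isCS _
    have hXG : X ⊆ G := (Set.subset_union_left).trans (aux_subset_latGen _)
    have haG : ((⊤ : WithTop ℕ), false) ∈ G :=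
      aux_subset_latGen _ (Set.mem_union_right _ rfl)
    obtain ⟨x, c⟩ := p
    cases c with
    | true => exact hXG (Or.inl rfl)
    | false =>
      have hxt : (x, true) ∈ G := hXG (Or.inl rfl)
      have hmem := aux_inf_mem hGcs haG hxt
      have heq : ((⊤ : WithTop ℕ), false) ⊓ (x, true) = (x, false) := by
        have h1 : (⊤ : WithTop ℕ) ⊓ x = x := top_inf_eq _
        simp [Prod.ext_iff, h1]
      rwa [heq] at hmem

/-- `(0, true)` is a generator. -/
lemma aux_gen_zerotrue : ¬ IsLatNonGenerator ((0 : WithTop ℕ), true) := by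
  set X : Set (WithTop ℕ × Bool) :=
    {p | p.2 = false ∨ p = ((⊤ : WithTop ℕ), true)} with hXdef
  refine aux_generator aux_Ptrue_cs ?_ ?_
  · intro h
    have hmem : ((0 : WithTop ℕ), true) ∈ X := h.ge (Set.mem_univ _)
    rcases hmem with h1 | h1
    · exact Bool.noConfusion h1
    · have h2 := congrArg Prod.fst h1
      simp only at h2
      rw [← WithTop.coe_zero] at h2
      exact WithTop.coe_ne_top h2
  · apply Set.eq_univ_of_forall
    intro p
    set G := latGen (X ∪ {((0 : WithTop ℕ), true)}) with hGdef
    have hGcs : IsCompleteSublattice G := aux_latGen_isCS _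
    have hXG : X ⊆ G := (Set.subset_union_left).trans (aux_subset_latGen _)
    have haG : ((0 : WithTop ℕ), true) ∈ G :=
      aux_subset_latGen _ (Set.mem_union_right _ rfl)
    obtain ⟨x, c⟩ := p
    cases c with
    | false => exact hXG (Or.inl rfl)
    | true =>
      have hxf : (x, false) ∈ G := hXG (Or.inl rfl)
      have hmem := aux_sup_mem hGcs haG hxf
      have heq : ((0 : WithTop ℕ), true) ⊔ (x, false) = (x, true) := by
        have h1 : (0 : WithTop ℕ) ⊔ x = x := by simp
        simp [Prod.ext_iff, h1]
      rwa [heq] at hmem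

end Generators

/-- In `L₁ = (WithTop ℕ) × Bool`, the set of non-generators is exactly
`{(0, false), (⊤, true)} = {⊥, ⊤}`; in particular it is a complete sublattice. -/
theorem nonGenerators_L1 :
    {a : WithTop ℕ × Bool | IsLatNonGenerator a} =
      ({((0 : WithTop ℕ), false), ((⊤ : WithTop ℕ), true)} : Set (WithTop ℕ × Bool)) ∧
    IsCompleteSublattice
      ({((0 : WithTop ℕ), false), ((⊤ : WithTop ℕ), true)} : Set (WithTop ℕ × Bool)) := by
  have hbot : ((0 : WithTop ℕ), false) = (⊥ : WithTop ℕ × Bool) := rfl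
  have htop : ((⊤ : WithTop ℕ), true) = (⊤ : WithTop ℕ × Bool) := rfl
  constructor
  · ext a
    simp only [Set.mem_setOf_eq, Set.mem_insert_iff, Set.mem_singleton_iff]
    constructor
    · intro h
      by_contra hne
      push_neg at hne
      obtain ⟨h1, h2⟩ := hne
      obtain ⟨x, b⟩ := a
      cases b with
      | false =>
        induction x using WithTop.recTopCoe with
        | top => exact aux_gen_topfalse h
        | coe n =>
          have hn : n ≠ 0 := by
            intro hn0
            subst hn0
            exact h1 (by rw [WithTop.coe_zero])
          exact aux_gen_coe n hn false h
      | true =>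
        induction x using WithTop.recTopCoe with
        | top => exact h2 rfl
        | coe n =>
          by_cases hn : n = 0
          · subst hn
            rw [show (WithTop.some (0:ℕ)) = (0 : WithTop ℕ) from WithTop.coe_zero] at h
            exact aux_gen_zerotrue h
          · exact aux_gen_coe n hn true h
    · intro h
      rcases h with h | h
      · exact h ▸ aux_nongen (Or.inl hbot)
      · exact h ▸ aux_nongen (Or.inr htop)
  · constructor
    · intro Y hY
      by_cases hb : ((0 : WithTop ℕ), false) ∈ Y
      · left
        rw [hbot] at hb ⊢
        exact le_antisymm (sInf_le hb) bot_le
      · right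
        rw [htop]
        refine le_antisymm le_top (le_sInf fun p hp => ?_)
        rcases hY hp with h | h
        · exact absurd (h ▸ hp) hb
        · exact (h.trans htop).ge
    · intro Y hY
      by_cases ht : ((⊤ : WithTop ℕ), true) ∈ Y
      · right
        rw [htop] at ht ⊢
        exact le_antisymm le_top (le_sSup ht)
      · left
        rw [hbot]
        refine le_antisymm (sSup_le fun p hp => ?_) bot_le
        rcases hY hp with h | h
        · exact (h.trans hbot).le
        · exact absurd (h ▸ hp) ht
end

section
/- Let K = WithTop (ℕ ×ₗ ℕ) (the lexicographic order on ℕ × ℕ with a top element ⊤ adjoined, a complete linear order of order type ω² + 1) and let L₂ = K × Bool with the componentwise lattice order. The set M = {(k, true) : k ∈ K} ∪ {(⊥, false)} is a proper complete sublattice of L₂, and the complete sublattice generated by M ∪ {(⊤, false)} is all of L₂. In particular, (⊤, false) is a relative generator of L₂. -/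
/-- `ℕ ×ₗ ℕ` is a well-order, hence conditionally complete with bottom;
this makes `WithTop (ℕ ×ₗ ℕ)` a complete lattice of order type `ω² + 1`. -/
noncomputable instance : ConditionallyCompleteLinearOrderBot (ℕ ×ₗ ℕ) :=
  WellFoundedLT.conditionallyCompleteLinearOrderBot _

/-- In `L₂ = (WithTop (ℕ ×ₗ ℕ)) × Bool`, the set `M = (K × {true}) ∪ {(⊥, false)}` is a
proper complete sublattice, and together with `(⊤, false)` it generates all of `L₂`;
in particular `(⊤, false)` is a relative generator. -/
theorem relativeGenerator_top_false_L2 :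
    IsCompleteSublattice
      ({p | p.2 = true} ∪ {((⊥ : WithTop (ℕ ×ₗ ℕ)), false)} : Set (WithTop (ℕ ×ₗ ℕ) × Bool)) ∧
    ({p | p.2 = true} ∪ {((⊥ : WithTop (ℕ ×ₗ ℕ)), false)} : Set (WithTop (ℕ ×ₗ ℕ) × Bool)) ≠
      Set.univ ∧
    latGen (({p | p.2 = true} ∪ {((⊥ : WithTop (ℕ ×ₗ ℕ)), false)} :
        Set (WithTop (ℕ ×ₗ ℕ) × Bool)) ∪ {((⊤ : WithTop (ℕ ×ₗ ℕ)), false)}) = Set.univ ∧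
    ¬ IsLatNonGenerator ((⊤ : WithTop (ℕ ×ₗ ℕ)), false) := by
  set M : Set (WithTop (ℕ ×ₗ ℕ) × Bool) :=
    {p | p.2 = true} ∪ {((⊥ : WithTop (ℕ ×ₗ ℕ)), false)} with hMdef
  have hbot : ((⊥ : WithTop (ℕ ×ₗ ℕ)), false) = (⊥ : WithTop (ℕ ×ₗ ℕ) × Bool) := by
    exact Prod.ext rfl rfl
  -- M is a complete sublattice
  have hsub : IsCompleteSublattice M := by
    constructor
    · intro Y hY
      by_cases h : ((⊥ : WithTop (ℕ ×ₗ ℕ)), false) ∈ Y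
      · right
        have h1 : sInf Y ≤ ((⊥ : WithTop (ℕ ×ₗ ℕ)), false) := sInf_le h
        rw [hbot] at h1 ⊢
        exact le_bot_iff.mp h1
      · left
        have h2 : ((⊥ : WithTop (ℕ ×ₗ ℕ) × Bool).1, true) ≤ sInf Y := by
          apply le_sInf
          intro y hy
          rcases hY hy with hy' | hy'
          · exact ⟨bot_le, le_of_eq hy'.symm⟩
          · exact absurd (hy' ▸ hy) h
        have := h2.2
        simpa using le_antisymm le_top this
    · intro Y hY
      by_cases h : ∃ y ∈ Y, y.2 = true
      · left
        obtain ⟨y, hy, hy2⟩ := h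
        have : y ≤ sSup Y := le_sSup hy
        have := this.2
        rw [hy2] at this
        simpa using le_antisymm le_top this
      · right
        push_neg at h
        have : sSup Y ≤ ((⊥ : WithTop (ℕ ×ₗ ℕ)), false) := by
          apply sSup_le
          intro y hy
          rcases hY hy with hy' | hy'
          · exact absurd hy' (by simpa using h y hy)
          · exact le_of_eq hy'
        rw [hbot] at this ⊢
        exact le_bot_iff.mp this
  have htf : ((⊤ : WithTop (ℕ ×ₗ ℕ)), false) ∉ M := by
    intro hmem
    rcases hmem with h | h
    · simp at h
    · rw [Set.mem_singleton_iff, Prod.ext_iff] at h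
      exact top_ne_bot h.1
  have hMne : M ≠ Set.univ := fun h => htf (h ▸ Set.mem_univ _)
  -- generation
  have hgen : latGen (M ∪ {((⊤ : WithTop (ℕ ×ₗ ℕ)), false)}) = Set.univ := by
    ext p
    simp only [Set.mem_univ, iff_true, latGen, Set.mem_sInter, Set.mem_setOf_eq]
    rintro S ⟨hS, hXS⟩
    have hMS : M ⊆ S := fun x hx => hXS (Or.inl hx)
    have htS : ((⊤ : WithTop (ℕ ×ₗ ℕ)), false) ∈ S := hXS (Or.inr rfl)
    rcases Bool.eq_false_or_eq_true p.2 with hp | hp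
    case inl => exact hMS (Or.inl hp)
    · have hpair : ({(p.1, true), ((⊤ : WithTop (ℕ ×ₗ ℕ)), false)} :
          Set (WithTop (ℕ ×ₗ ℕ) × Bool)) ⊆ S := by
        rintro x (rfl | rfl)
        · exact hMS (Or.inl rfl)
        · exact htS
      have := hS.1 _ hpair
      rw [sInf_pair] at this
      have heq : (p.1, true) ⊓ ((⊤ : WithTop (ℕ ×ₗ ℕ)), false) = p := by
        rw [Prod.mk_inf_mk]
        simp [hp, Prod.ext_iff]
      rwa [heq] at this
  refine ⟨hsub, hMne, hgen, ?_⟩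
  intro hng
  apply hMne
  have hle : latGen M ⊆ M := Set.sInter_subset_of_mem ⟨hsub, subset_rfl⟩
  have := hng M hgen
  rw [this] at hle
  exact Set.eq_univ_of_univ_subset hle
end
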